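/- (Lemma 3.7, identity (3.17).) Suppose τ₁, τ₂ : (ℕ → ℂ) × (ℕ → ℂ) → ℂ are continuous and (τ₁, τ₂) satisfies the KP-mKP Fay identity. Then for all x, y : ℕ → ℂ and all pairwise distinct nonzero s₁, s₂, s₃ ∈ ℂ: τ₁(x, y) · τ₂(x + [s₁] − [s₂], y − [s₃]) = (1 − s₂/s₁) · τ₁(x − [s₂], y) · τ₂(x + [s₁], y − [s₃]) + (s₂/s₁) · τ₁(x + [s₁] − [s₂], y) · τ₂(x, y − [s₃]). -/

import Mathlib

/-- The shift `[s] : ℕ → ℂ`, `[s](k) = s^(k+1)/(k+1)`, representing the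
sequence `(s, s²/2, s³/3, …)` of time variables. -/
noncomputable def sh (s : ℂ) : ℕ → ℂ := fun k => s ^ (k + 1) / ((k : ℂ) + 1)

/-- The KP-mKP Fay identity (equation (3.1) of the paper) for a pair of tau
functions `(τ₁, τ₂)`. -/
def KPmKPFay (τ₁ τ₂ : (ℕ → ℂ) × (ℕ → ℂ) → ℂ) : Prop :=
  ∀ x y : ℕ → ℂ, ∀ s0 s1 s2 s3 t0 t1 t2 t3 : ℂ,
    s0 ≠ 0 → s1 ≠ 0 → s2 ≠ 0 → s3 ≠ 0 →
    s0 ≠ s1 → s0 ≠ s2 → s0 ≠ s3 → s1 ≠ s2 → s1 ≠ s3 → s2 ≠ s3 →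
    t0 ≠ 0 → t1 ≠ 0 → t2 ≠ 0 → t3 ≠ 0 →
    t0 ≠ t1 → t0 ≠ t2 → t0 ≠ t3 → t1 ≠ t2 → t1 ≠ t3 → t2 ≠ t3 →
    (s1 * (s1 - s0) / ((s1 - s2) * (s1 - s3)))
        * τ₁ (x + sh s2 + sh s3, y + sh t1 + sh t2 + sh t3)
        * τ₂ (x + sh s0 + sh s1, y + sh t0)
      + (s2 * (s2 - s0) / ((s2 - s3) * (s2 - s1)))
        * τ₁ (x + sh s3 + sh s1, y + sh t1 + sh t2 + sh t3)
        * τ₂ (x + sh s0 + sh s2, y + sh t0)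
      + (s3 * (s3 - s0) / ((s3 - s1) * (s3 - s2)))
        * τ₁ (x + sh s1 + sh s2, y + sh t1 + sh t2 + sh t3)
        * τ₂ (x + sh s0 + sh s3, y + sh t0)
    = (t1 * (t1 - t0) / ((t1 - t2) * (t1 - t3)))
        * τ₂ (x + sh s1 + sh s2 + sh s3, y + sh t2 + sh t3)
        * τ₁ (x + sh s0, y + sh t0 + sh t1)
      + (t2 * (t2 - t0) / ((t2 - t3) * (t2 - t1)))
        * τ₂ (x + sh s1 + sh s2 + sh s3, y + sh t3 + sh t1)
        * τ₁ (x + sh s0, y + sh t0 + sh t2)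
      + (t3 * (t3 - t0) / ((t3 - t1) * (t3 - t2)))
        * τ₂ (x + sh s1 + sh s2 + sh s3, y + sh t1 + sh t2)
        * τ₁ (x + sh s0, y + sh t0 + sh t3)

lemma sh_zero : sh 0 = 0 := by funext k; simp [sh]

@[fun_prop]
lemma continuous_sh : Continuous sh := by
  apply continuous_pi
  intro k
  exact (continuous_pow (k + 1)).div_const _

/-- Lemma 3.7, identity (3.17). -/
theorem fay_identity_317 (τ₁ τ₂ : (ℕ → ℂ) × (ℕ → ℂ) → ℂ)
    (hc1 : Continuous τ₁) (hc2 : Continuous τ₂)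
    (hFay : KPmKPFay τ₁ τ₂) :
    ∀ x y : ℕ → ℂ, ∀ s1 s2 s3 : ℂ,
      s1 ≠ 0 → s2 ≠ 0 → s3 ≠ 0 → s1 ≠ s2 → s1 ≠ s3 → s2 ≠ s3 →
      τ₁ (x, y) * τ₂ (x + sh s1 - sh s2, y - sh s3)
        = (1 - s2 / s1) * τ₁ (x - sh s2, y) * τ₂ (x + sh s1, y - sh s3)
          + (s2 / s1) * τ₁ (x + sh s1 - sh s2, y) * τ₂ (x, y - sh s3) := by
  intro x y s1 s2 s3 h1 h2 h3 h12 h13 h23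
  set F : ℂ → ℂ := fun e =>
    (s1 * (s1 - s2) / ((s1 - e) * (s1 - 2*e)))
      * τ₁ (x - sh s2 + sh e + sh (2*e), y - sh s3 + sh s3 + sh e + sh (2*e))
      * τ₂ (x - sh s2 + sh s2 + sh s1, y - sh s3 + sh (e^2))
    + (-(e - s2) / (e - s1))
      * τ₁ (x - sh s2 + sh (2*e) + sh s1, y - sh s3 + sh s3 + sh e + sh (2*e))
      * τ₂ (x - sh s2 + sh s2 + sh e, y - sh s3 + sh (e^2))
    + (2 * (2*e - s2) / (2*e - s1))
      * τ₁ (x - sh s2 + sh s1 + sh e, y - sh s3 + sh s3 + sh e + sh (2*e))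
      * τ₂ (x - sh s2 + sh s2 + sh (2*e), y - sh s3 + sh (e^2)) with hFdef
  set G : ℂ → ℂ := fun e =>
    (s3 * (s3 - e^2) / ((s3 - e) * (s3 - 2*e)))
      * τ₂ (x - sh s2 + sh s1 + sh e + sh (2*e), y - sh s3 + sh e + sh (2*e))
      * τ₁ (x - sh s2 + sh s2, y - sh s3 + sh (e^2) + sh s3)
    + (-(e * (1 - e)) / (e - s3))
      * τ₂ (x - sh s2 + sh s1 + sh e + sh (2*e), y - sh s3 + sh (2*e) + sh s3)
      * τ₁ (x - sh s2 + sh s2, y - sh s3 + sh (e^2) + sh e)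
    + (2 * e * (2 - e) / (2*e - s3))
      * τ₂ (x - sh s2 + sh s1 + sh e + sh (2*e), y - sh s3 + sh s3 + sh e)
      * τ₁ (x - sh s2 + sh s2, y - sh s3 + sh (e^2) + sh (2*e)) with hGdef
  have key : F 0 = G 0 := by
    have hFc : ContinuousAt F 0 := by
      rw [hFdef]
      apply ContinuousAt.add
      apply ContinuousAt.add
      · refine (ContinuousAt.mul (ContinuousAt.mul (ContinuousAt.div (by fun_prop)
          (by fun_prop) ?_) (Continuous.continuousAt (by fun_prop))) (Continuous.continuousAt (by fun_prop)))
        simp [h1]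
      · refine (ContinuousAt.mul (ContinuousAt.mul (ContinuousAt.div (by fun_prop)
          (by fun_prop) ?_) (Continuous.continuousAt (by fun_prop))) (Continuous.continuousAt (by fun_prop)))
        simp [h1]
      · refine (ContinuousAt.mul (ContinuousAt.mul (ContinuousAt.div (by fun_prop)
          (by fun_prop) ?_) (Continuous.continuousAt (by fun_prop))) (Continuous.continuousAt (by fun_prop)))
        simp [h1]
    have hGc : ContinuousAt G 0 := by
      rw [hGdef]
      apply ContinuousAt.add
      apply ContinuousAt.add
      · refine (ContinuousAt.mul (ContinuousAt.mul (ContinuousAt.div (by fun_prop)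
          (by fun_prop) ?_) (Continuous.continuousAt (by fun_prop))) (Continuous.continuousAt (by fun_prop)))
        simp [h3]
      · refine (ContinuousAt.mul (ContinuousAt.mul (ContinuousAt.div (by fun_prop)
          (by fun_prop) ?_) (Continuous.continuousAt (by fun_prop))) (Continuous.continuousAt (by fun_prop)))
        simp [h3]
      · refine (ContinuousAt.mul (ContinuousAt.mul (ContinuousAt.div (by fun_prop)
          (by fun_prop) ?_) (Continuous.continuousAt (by fun_prop))) (Continuous.continuousAt (by fun_prop)))
        simp [h3]
    have hev : ∀ᶠ e in nhdsWithin (0:ℂ) {0}ᶜ, F e = G e := by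
      have E1 : ∀ᶠ e in nhds (0:ℂ), e ≠ s1 := eventually_ne_nhds (Ne.symm h1)
      have E2 : ∀ᶠ e in nhds (0:ℂ), e ≠ s2 := eventually_ne_nhds (Ne.symm h2)
      have E3 : ∀ᶠ e in nhds (0:ℂ), e ≠ s3 := eventually_ne_nhds (Ne.symm h3)
      have E4 : ∀ᶠ e in nhds (0:ℂ), e ≠ s1/2 :=
        eventually_ne_nhds (Ne.symm (div_ne_zero h1 two_ne_zero))
      have E5 : ∀ᶠ e in nhds (0:ℂ), e ≠ s2/2 :=
        eventually_ne_nhds (Ne.symm (div_ne_zero h2 two_ne_zero))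
      have E6 : ∀ᶠ e in nhds (0:ℂ), e ≠ s3/2 :=
        eventually_ne_nhds (Ne.symm (div_ne_zero h3 two_ne_zero))
      have E7 : ∀ᶠ e in nhds (0:ℂ), e ≠ 1 := eventually_ne_nhds (by norm_num)
      have E8 : ∀ᶠ e in nhds (0:ℂ), e ≠ 2 := eventually_ne_nhds (by norm_num)
      have E9 : ∀ᶠ e in nhds (0:ℂ), e^2 ≠ s3 := by
        have ht : Filter.Tendsto (fun e : ℂ => e^2) (nhds 0) (nhds 0) := by
          simpa using (continuous_pow 2).tendsto (0:ℂ)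
        exact ht.eventually (eventually_ne_nhds (Ne.symm h3))
      filter_upwards [E1.filter_mono nhdsWithin_le_nhds, E2.filter_mono nhdsWithin_le_nhds,
        E3.filter_mono nhdsWithin_le_nhds, E4.filter_mono nhdsWithin_le_nhds,
        E5.filter_mono nhdsWithin_le_nhds, E6.filter_mono nhdsWithin_le_nhds,
        E7.filter_mono nhdsWithin_le_nhds, E8.filter_mono nhdsWithin_le_nhds,
        E9.filter_mono nhdsWithin_le_nhds, self_mem_nhdsWithin]
        with e he1 he2 he3 he4 he5 he6 he7 he8 he9 he0'
      have he0 : e ≠ 0 := he0'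
      have h2e : (2:ℂ)*e ≠ 0 := mul_ne_zero two_ne_zero he0
      have heq : e^2 ≠ 0 := pow_ne_zero _ he0
      have hs2e : s2 ≠ e := Ne.symm he2
      have hs22e : s2 ≠ 2*e := fun h => he5 (by rw [h]; ring)
      have hs1e : s1 ≠ e := Ne.symm he1
      have hs12e : s1 ≠ 2*e := fun h => he4 (by rw [h]; ring)
      have he2e : e ≠ 2*e := fun h => he0 (by linear_combination -h)
      have heqe : e^2 ≠ e := fun h => he7 (mul_left_cancel₀ he0 (by linear_combination h))
      have heq2e : e^2 ≠ 2*e := fun h => he8 (mul_left_cancel₀ he0 (by linear_combination h))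
      have hs3e : s3 ≠ e := Ne.symm he3
      have hs32e : s3 ≠ 2*e := fun h => he6 (by rw [h]; ring)
      have fay := hFay (x - sh s2) (y - sh s3) s2 s1 e (2*e) (e^2) s3 e (2*e)
        h2 h1 he0 h2e (Ne.symm h12) hs2e hs22e hs1e hs12e he2e
        heq h3 he0 h2e he9 heqe heq2e hs3e hs32e he2e
      have hes1 : e - s1 ≠ 0 := sub_ne_zero.mpr he1
      have h2es1 : 2*e - s1 ≠ 0 := sub_ne_zero.mpr (fun h => hs12e h.symm)
      have hes3 : e - s3 ≠ 0 := sub_ne_zero.mpr he3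
      have h2es3 : 2*e - s3 ≠ 0 := sub_ne_zero.mpr (fun h => hs32e h.symm)
      have c2 : e * (e - s2) / ((e - 2*e) * (e - s1)) = -(e - s2) / (e - s1) := by
        rw [show e - 2*e = -e by ring]
        field_simp
      have c3 : 2*e * (2*e - s2) / ((2*e - s1) * (2*e - e)) = 2 * (2*e - s2) / (2*e - s1) := by
        rw [show 2*e - e = e by ring]
        rw [div_eq_div_iff (mul_ne_zero h2es1 he0) h2es1]
        ring
      have d2 : e * (e - e^2) / ((e - 2*e) * (e - s3)) = -(e * (1 - e)) / (e - s3) := by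
        rw [show e - 2*e = -e by ring]
        rw [div_eq_div_iff (mul_ne_zero (neg_ne_zero.mpr he0) hes3) hes3]
        ring
      have d3 : 2*e * (2*e - e^2) / ((2*e - s3) * (2*e - e)) = 2 * e * (2 - e) / (2*e - s3) := by
        rw [show 2*e - e = e by ring]
        rw [div_eq_div_iff (mul_ne_zero h2es3 he0) h2es3]
        ring
      rw [c2, c3, d2, d3] at fay
      exact fay
    have hFt : Filter.Tendsto F (nhdsWithin (0:ℂ) {0}ᶜ) (nhds (F 0)) :=
      hFc.continuousWithinAt.tendsto
    have hGt : Filter.Tendsto G (nhdsWithin (0:ℂ) {0}ᶜ) (nhds (G 0)) :=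
      hGc.continuousWithinAt.tendsto
    exact tendsto_nhds_unique (hFt.congr' hev) hGt
  rw [hFdef, hGdef] at key
  norm_num [sh_zero] at key
  rw [show x - sh s2 + sh s1 = x + sh s1 - sh s2 from by abel] at key
  rw [show s3 * s3 / (s3 * s3) = 1 from div_self (mul_ne_zero h3 h3), one_mul] at key
  rw [show s1 * (s1 - s2) / (s1 * s1) = 1 - s2 / s1 from by field_simp] at key
  linear_combination -key
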